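/- The p-core of a partition is well-defined: if two sequences of rim p-hook removals from a partition λ both terminate in partitions from which no rim p-hook can be removed, then the two resulting partitions are equal. -/

import Mathlib

/-!
Encode a diagram `μ` with fewer than `N` rows by its β-numbers `μₖ + N - k` (`k ≤ N`), a set of
`N + 1` naturals that determines `μ`. Removing a rim `p`-hook occupying rows `i, …, j` replaces the
β-number of row `i` by that number minus `p`, and conversely every move `b ↦ b - p` onto a value
outside the set comes from a rim hook. Hence the multiset of β-numbers mod `p` is invariant under
hook removal, and `μ` is a `p`-core exactly when its β-set is closed under `b ↦ b - p`. A closed set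
meets every residue class mod `p` in an initial segment of that class (a full "runner" of the
abacus), so it is determined by its residues mod `p`: any two `p`-cores reached from `λ` coincide.
-/

/-- Two cells are adjacent if they share an edge. -/
def Adj (a b : ℕ × ℕ) : Prop :=
  (a.1 = b.1 ∧ (a.2 = b.2 + 1 ∨ b.2 = a.2 + 1)) ∨
  (a.2 = b.2 ∧ (a.1 = b.1 + 1 ∨ b.1 = a.1 + 1))

/-- A set of cells is connected under edge-adjacency. -/
def ConnectedCells (S : Finset (ℕ × ℕ)) : Prop :=
  ∀ a ∈ S, ∀ b ∈ S, Relation.ReflTransGen (fun x y => y ∈ S ∧ Adj x y) a b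

/-- The rim of a Young diagram: cells `(i,j)` with `(i+1,j+1)` not in the diagram. -/
def YoungDiagram.rim (μ : YoungDiagram) : Finset (ℕ × ℕ) :=
  μ.cells.filter fun c => (c.1 + 1, c.2 + 1) ∉ μ.cells

/-- `ν` is obtained from `μ` by removing a rim `p`-hook. -/
def IsRimHookRemoval (p : ℕ) (μ ν : YoungDiagram) : Prop :=
  ν.cells ⊆ μ.cells ∧ (μ.cells \ ν.cells).card = p ∧
    (μ.cells \ ν.cells) ⊆ μ.rim ∧ ConnectedCells (μ.cells \ ν.cells)

/-- A partition is a `p`-core if no rim `p`-hook can be removed. -/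
def IsPCore (p : ℕ) (μ : YoungDiagram) : Prop :=
  ¬ ∃ ν : YoungDiagram, IsRimHookRemoval p μ ν

/-- `c` is the `p`-core of `μ`. -/
def IsPCoreOf (p : ℕ) (μ c : YoungDiagram) : Prop :=
  Relation.ReflTransGen (IsRimHookRemoval p) μ c ∧ IsPCore p c

/-- The `r`-staircase Young diagram `(r, r-1, …, 2, 1)`. -/
def staircase (r : ℕ) : YoungDiagram where
  cells := (Finset.range r ×ˢ Finset.range r).filter fun c => c.1 + c.2 < r
  isLowerSet := by
    intro a b hba ha
    simp only [Finset.coe_filter, Set.mem_setOf_eq, Finset.mem_product,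
      Finset.mem_range] at ha ⊢
    obtain ⟨hb1, hb2⟩ := hba
    exact ⟨⟨lt_of_le_of_lt hb1 ha.1.1, lt_of_le_of_lt hb2 ha.1.2⟩, by omega⟩

open Finset

lemma Finset.map_val_insert_erase {α β : Type*} [DecidableEq α] {s : Finset α} {a b : α}
    {f : α → β} (hb : b ∈ s) (ha : a ∉ s) (hab : f a = f b) :
    (insert a (s.erase b)).val.map f = s.val.map f := by
  rw [insert_val_of_notMem fun h => ha (mem_of_mem_erase h), Multiset.map_cons, hab,
    ← Multiset.map_cons, erase_val, Multiset.cons_erase hb]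

lemma Finset.eq_range_card_of_add_one_mem {T : Finset ℕ} (h : ∀ t, t + 1 ∈ T → t ∈ T) :
    T = range #T := by
  have hdown : ∀ t ∈ T, range (t + 1) ⊆ T := by
    intro t ht
    induction t with
    | zero => simpa using ht
    | succ t ih => simpa [range_add_one, insert_subset_iff, ht] using ih (h t ht)
  refine eq_of_subset_of_card_le (fun t ht => ?_) (card_range _).le
  have := card_le_card (hdown t ht)
  rw [card_range] at this
  exact mem_range.2 this

lemma Finset.mem_iff_div_lt_count_mod {B : Finset ℕ} {p : ℕ} (hp : 0 < p)
    (hB : ∀ b ∈ B, p ≤ b → b - p ∈ B) (x : ℕ) :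
    x ∈ B ↔ x / p < (B.val.map (· % p)).count (x % p) := by
  set F := B.filter fun y => x % p = y % p
  have hcount : (B.val.map (· % p)).count (x % p) = #F := by
    rw [Multiset.count_map]
    rfl
  have hdivmod : ∀ y z, y / p = z / p → y % p = z % p → y = z := fun y z hdiv hmod => by
    rw [← Nat.div_add_mod y p, ← Nat.div_add_mod z p, hdiv, hmod]
  have hinj : Set.InjOn (· / p) F := fun y hy z hz hyz =>
    hdivmod y z hyz ((mem_filter.1 hy).2.symm.trans (mem_filter.1 hz).2)
  -- by closedness, the quotients by `p` of the elements of `B` congruent to `x` form an initial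
  -- segment of ℕ
  set T := F.image (· / p)
  have hT : T = range #F := by
    rw [← card_image_of_injOn hinj]
    refine Finset.eq_range_card_of_add_one_mem fun q hq => ?_
    obtain ⟨y, hy, hyq⟩ := mem_image.1 hq
    obtain ⟨hyB, hyx⟩ := mem_filter.1 hy
    have hpy : p ≤ y := by
      by_contra! hpy
      rw [Nat.div_eq_of_lt hpy] at hyq
      omega
    have hy' : y = y - p + p := (Nat.sub_add_cancel hpy).symm
    refine mem_image.2 ⟨y - p, mem_filter.2 ⟨hB y hyB hpy, ?_⟩, ?_⟩
    · rw [hyx, hy', Nat.add_mod_right, ← hy']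
    · rw [hy', Nat.add_div_right _ hp] at hyq
      omega
  rw [hcount, ← mem_range, ← hT]
  constructor
  · exact fun hx => mem_image.2 ⟨x, mem_filter.2 ⟨hx, rfl⟩, rfl⟩
  · intro hx
    obtain ⟨y, hy, hyx⟩ := mem_image.1 hx
    obtain ⟨hyB, hxy⟩ := mem_filter.1 hy
    exact hdivmod y x hyx hxy.symm ▸ hyB

namespace YoungDiagram

lemma rowLen_le_rowLen_of_subset {μ ν : YoungDiagram} (h : ν.cells ⊆ μ.cells) (k : ℕ) :
    ν.rowLen k ≤ μ.rowLen k := by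
  by_contra! hlt
  have hmem : (k, μ.rowLen k) ∈ ν.cells := mem_iff_lt_rowLen.2 hlt
  exact (mem_iff_lt_rowLen.1 (h hmem)).false

lemma rowLen_eq_zero_of_le {μ : YoungDiagram} {N k : ℕ} (hN : (N, 0) ∉ μ) (hk : N ≤ k) :
    μ.rowLen k = 0 := by
  by_contra h
  exact hN (μ.up_left_mem hk le_rfl (mem_iff_lt_rowLen.2 (Nat.pos_of_ne_zero h)))

lemma lt_of_mk_mem {μ : YoungDiagram} {N k c : ℕ} (hN : (N, 0) ∉ μ) (h : (k, c) ∈ μ) : k < N := by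
  by_contra! hk
  exact hN (μ.up_left_mem hk (Nat.zero_le c) h)

lemma ext_of_rowLen {μ ν : YoungDiagram} (h : ∀ k, μ.rowLen k = ν.rowLen k) : μ = ν := by
  ext ⟨k, c⟩
  simp only [mem_cells, mem_iff_lt_rowLen, h]

lemma mk_mem_cells_sdiff {μ ν : YoungDiagram} {k c : ℕ} :
    (k, c) ∈ μ.cells \ ν.cells ↔ ν.rowLen k ≤ c ∧ c < μ.rowLen k := by
  simp only [mem_sdiff, mem_cells, mem_iff_lt_rowLen, not_lt]
  exact and_comm

lemma card_cells_eq_sum_rowLen {μ : YoungDiagram} {N : ℕ} (hN : (N, 0) ∉ μ) :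
    #μ.cells = ∑ k ∈ range N, μ.rowLen k := by
  have hcells : μ.cells = (range N).biUnion μ.row := by
    ext ⟨k, c⟩
    simp only [mem_biUnion, mem_range, mem_row_iff, mem_cells]
    exact ⟨fun hm => ⟨k, lt_of_mk_mem hN hm, hm, rfl⟩, fun ⟨_, _, hm, _⟩ => hm⟩
  rw [hcells, card_biUnion]
  · exact sum_congr rfl fun k _ => (μ.rowLen_eq_card).symm
  · intro k _ l _ hkl
    simp only [Function.onFun, disjoint_left, mem_row_iff]
    exact fun _ hk hl => hkl (hk.2.symm.trans hl.2)

lemma rowLen_eq_of_forall_mem_iff {μ : YoungDiagram} {k n : ℕ} (h : ∀ c, (k, c) ∈ μ ↔ c < n) :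
    μ.rowLen k = n := by
  have h1 := h (μ.rowLen k)
  have h2 := h n
  simp only [mem_iff_lt_rowLen, lt_self_iff_false, iff_false, false_iff, not_lt] at h1 h2
  exact le_antisymm h2 h1

def restrictRowLen (μ : YoungDiagram) (f : ℕ → ℕ) (hf : Antitone f) : YoungDiagram where
  cells := μ.cells.filter fun c => c.2 < f c.1
  isLowerSet := by
    rintro a b ⟨h1, h2⟩ hb
    simp only [coe_filter, Set.mem_ofPred_eq, mem_cells] at hb ⊢
    exact ⟨μ.isLowerSet ⟨h1, h2⟩ hb.1, lt_of_le_of_lt h2 (lt_of_lt_of_le hb.2 (hf h1))⟩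

lemma rowLen_restrictRowLen (μ : YoungDiagram) {f : ℕ → ℕ} (hf : Antitone f) (k : ℕ) :
    (μ.restrictRowLen f hf).rowLen k = min (μ.rowLen k) (f k) :=
  rowLen_eq_of_forall_mem_iff fun c => by
    rw [lt_min_iff, ← mem_iff_lt_rowLen, ← mem_cells]
    exact mem_filter

end YoungDiagram

lemma Adj.symm {a b : ℕ × ℕ} (h : Adj a b) : Adj b a := by
  unfold Adj at *
  omega

section Connected

variable {S : Finset (ℕ × ℕ)}

lemma connectedCells_of_forall_reach (r : ℕ × ℕ)
    (h : ∀ a ∈ S, Relation.ReflTransGen (fun x y => x ∈ S ∧ y ∈ S ∧ Adj x y) a r) :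
    ConnectedCells S := by
  intro a ha b hb
  have hback : Relation.ReflTransGen (fun x y => x ∈ S ∧ y ∈ S ∧ Adj x y) r b :=
    Relation.ReflTransGen.mono (fun _ _ ⟨hx, hy, hxy⟩ => ⟨hy, hx, hxy.symm⟩) _ _ (h b hb).swap
  exact Relation.ReflTransGen.mono (fun _ _ hxy => ⟨hxy.2.1, hxy.2.2⟩) _ _ ((h a ha).trans hback)

lemma reflTransGen_of_row_segment {k c d : ℕ} (hcd : c ≤ d)
    (h : ∀ e, c ≤ e → e ≤ d → (k, e) ∈ S) :
    Relation.ReflTransGen (fun x y => x ∈ S ∧ y ∈ S ∧ Adj x y) (k, d) (k, c) := by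
  induction d, hcd using Nat.le_induction with
  | base => exact .refl
  | succ d hcd ih =>
    refine .head ⟨h _ (by omega) le_rfl, h _ hcd (by omega), Or.inl ⟨rfl, Or.inl rfl⟩⟩ ?_
    exact ih fun e h1 h2 => h e h1 (by omega)

lemma exists_vertical_of_reflTransGen {a b : ℕ × ℕ}
    (hab : Relation.ReflTransGen (fun x y => y ∈ S ∧ Adj x y) a b) (ha : a ∈ S) {k : ℕ}
    (hak : a.1 ≤ k) (hkb : k < b.1) : ∃ c, (k, c) ∈ S ∧ (k + 1, c) ∈ S := by
  induction hab with
  | refl => omega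
  | @tail x y hax hxy ih =>
    by_cases hkx : k < x.1
    · exact ih hkx
    have hx : x ∈ S := by
      rcases hax.cases_tail with rfl | ⟨_, _, hx⟩
      · exact ha
      · exact hx.1
    obtain ⟨hy, hadj⟩ := hxy
    obtain ⟨x1, x2⟩ := x
    obtain ⟨y1, y2⟩ := y
    have hrows : x1 = k ∧ y1 = k + 1 ∧ x2 = y2 := by unfold Adj at hadj; dsimp at *; omega
    obtain ⟨rfl, rfl, rfl⟩ := hrows
    exact ⟨x2, hx, hy⟩

end Connected

namespace YoungDiagram

/-- Row-length form of a rim hook removal whose hook occupies rows `i, …, j`: in each row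
`k < j` the removed cells start directly above the last cell of row `k + 1`. -/
structure IsRimHookRemovalRows (μ ν : YoungDiagram) (i j : ℕ) : Prop where
  le : i ≤ j
  rowLen_lt : ν.rowLen j < μ.rowLen j
  rowLen_eq : ∀ k, k < i ∨ j < k → ν.rowLen k = μ.rowLen k
  rowLen_succ : ∀ k, i ≤ k → k < j → μ.rowLen (k + 1) = ν.rowLen k + 1

namespace IsRimHookRemovalRows

variable {μ ν : YoungDiagram} {i j : ℕ}

lemma rowLen_lt_of_mem (h : IsRimHookRemovalRows μ ν i j) {k : ℕ} (hik : i ≤ k) (hkj : k ≤ j) :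
    ν.rowLen k < μ.rowLen k := by
  rcases hkj.lt_or_eq with hkj | rfl
  · have := h.rowLen_succ k hik hkj
    have := μ.rowLen_anti k (k + 1) k.le_succ
    omega
  · exact h.rowLen_lt

lemma rowLen_le (h : IsRimHookRemovalRows μ ν i j) (k : ℕ) : ν.rowLen k ≤ μ.rowLen k := by
  by_cases hk : i ≤ k ∧ k ≤ j
  · exact (h.rowLen_lt_of_mem hk.1 hk.2).le
  · exact (h.rowLen_eq k (by omega)).le

lemma subset (h : IsRimHookRemovalRows μ ν i j) : ν.cells ⊆ μ.cells := fun c hc => by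
  rw [mem_cells, mem_iff_lt_rowLen] at hc ⊢
  exact hc.trans_le (h.rowLen_le c.1)

lemma mem_rows (h : IsRimHookRemovalRows μ ν i j) {k c : ℕ} (hkc : (k, c) ∈ μ.cells \ ν.cells) :
    i ≤ k ∧ k ≤ j := by
  rw [mk_mem_cells_sdiff] at hkc
  by_contra hk
  have := h.rowLen_eq k (by omega)
  omega

lemma sdiff_subset_rim (h : IsRimHookRemovalRows μ ν i j) : μ.cells \ ν.cells ⊆ μ.rim := by
  rintro ⟨k, c⟩ hkc
  obtain ⟨hik, hkj⟩ := h.mem_rows hkc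
  refine mem_filter.2 ⟨mem_sdiff.1 hkc |>.1, ?_⟩
  rw [mk_mem_cells_sdiff] at hkc
  change (k + 1, c + 1) ∉ μ.cells
  rw [mem_cells, mem_iff_lt_rowLen, not_lt]
  rcases hkj.lt_or_eq with hkj | rfl
  · have := h.rowLen_succ k hik hkj
    omega
  · have := h.rowLen_eq (k + 1) (by omega)
    have := ν.rowLen_anti k (k + 1) k.le_succ
    omega

lemma connectedCells (h : IsRimHookRemovalRows μ ν i j) : ConnectedCells (μ.cells \ ν.cells) := by
  set S := μ.cells \ ν.cells
  have hrow : ∀ k c, (k, c) ∈ S →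
      Relation.ReflTransGen (fun x y => x ∈ S ∧ y ∈ S ∧ Adj x y) (k, c) (k, ν.rowLen k) := by
    intro k c hkc
    rw [mk_mem_cells_sdiff] at hkc
    exact reflTransGen_of_row_segment hkc.1 fun e h1 h2 => mk_mem_cells_sdiff.2 ⟨h1, by omega⟩
  -- the first removed cell of row `k < j` reaches row `k + 1` through the cell below it
  have hcorner : ∀ d k, i ≤ k → k + d = j → Relation.ReflTransGen
      (fun x y => x ∈ S ∧ y ∈ S ∧ Adj x y) (k, ν.rowLen k) (j, ν.rowLen j) := by
    intro d
    induction d with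
    | zero =>
      rintro k - rfl
      exact .refl
    | succ d ih =>
      intro k hik hkj
      have hsucc := h.rowLen_succ k hik (by omega)
      have hanti := ν.rowLen_anti k (k + 1) k.le_succ
      have hcorner : (k, ν.rowLen k) ∈ S :=
        mk_mem_cells_sdiff.2 ⟨le_rfl, h.rowLen_lt_of_mem hik (by omega)⟩
      have hbelow : (k + 1, ν.rowLen k) ∈ S := mk_mem_cells_sdiff.2 ⟨hanti, by omega⟩
      exact .head ⟨hcorner, hbelow, Or.inr ⟨rfl, Or.inr rfl⟩⟩
        ((hrow _ _ hbelow).trans (ih (k + 1) (by omega) (by omega)))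
  refine connectedCells_of_forall_reach (j, ν.rowLen j) fun ⟨k, c⟩ hkc => ?_
  obtain ⟨hik, hkj⟩ := h.mem_rows hkc
  exact (hrow k c hkc).trans (hcorner (j - k) k hik (by omega))

lemma isRimHookRemoval (h : IsRimHookRemovalRows μ ν i j) :
    IsRimHookRemoval (#μ.cells - #ν.cells) μ ν :=
  ⟨h.subset, card_sdiff_of_subset h.subset, h.sdiff_subset_rim, h.connectedCells⟩

lemma sum_rowLen_sub (h : IsRimHookRemovalRows μ ν i j) {N : ℕ} (hjN : j < N) :
    ∑ k ∈ range N, ((μ.rowLen k : ℤ) - ν.rowLen k) =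
      μ.rowLen i - ν.rowLen j + (j - i) := by
  -- inside the hook `μₖ - νₖ = μₖ - μₖ₊₁ + 1`, so the partial sums telescope
  have htel : ∀ n, ∑ k ∈ range n, ((μ.rowLen k : ℤ) - ν.rowLen k) =
      if n ≤ i then 0 else if n ≤ j then (μ.rowLen i : ℤ) - μ.rowLen n + (n - i)
      else (μ.rowLen i : ℤ) - ν.rowLen j + (j - i) := by
    intro n
    induction n with
    | zero => simp
    | succ n ih =>
      rw [sum_range_succ, ih]
      have := h.le
      by_cases hn : i ≤ n ∧ n < j
      · have := h.rowLen_succ n hn.1 hn.2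
        obtain rfl | hni := eq_or_ne n i <;> split_ifs <;> omega
      · by_cases hnj : n = j
        · subst hnj
          obtain rfl | hni := eq_or_ne n i <;> split_ifs <;> omega
        · have := h.rowLen_eq n (by omega)
          split_ifs <;> omega
  have := h.le
  rw [htel, if_neg (by omega), if_neg (by omega)]

end IsRimHookRemovalRows

lemma _root_.IsRimHookRemoval.exists_isRimHookRemovalRows {p : ℕ} {μ ν : YoungDiagram}
    (hp : 0 < p) (h : IsRimHookRemoval p μ ν) : ∃ i j, IsRimHookRemovalRows μ ν i j := by
  obtain ⟨hsub, hcard, hrim, hconn⟩ := h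
  set S := μ.cells \ ν.cells
  have hle := rowLen_le_rowLen_of_subset hsub
  set T := S.image Prod.fst
  have hT : ∀ k, k ∈ T ↔ ν.rowLen k < μ.rowLen k := fun k => by
    simp only [T, mem_image, Prod.exists, exists_and_right, exists_eq_right, S,
      mk_mem_cells_sdiff]
    exact ⟨fun ⟨_, h1, h2⟩ => h1.trans_lt h2, fun hk => ⟨_, le_rfl, hk⟩⟩
  have hTne : T.Nonempty := (card_pos.1 (hcard ▸ hp)).image _
  have hi := (hT _).1 (T.min'_mem hTne)
  have hj := (hT _).1 (T.max'_mem hTne)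
  refine ⟨T.min' hTne, T.max' hTne, T.min'_le _ (T.max'_mem hTne), hj, ?_, ?_⟩
  · intro k hk
    have hkT : k ∉ T := fun hkT => by
      have := T.min'_le k hkT
      have := T.le_max' k hkT
      omega
    rw [hT] at hkT
    exact le_antisymm (hle k) (not_lt.1 hkT)
  · -- a path from the first to the last touched row passes from row `k` to row `k + 1` within a
    -- column, and the rim condition at the first removed cell of row `k` bounds `μₖ₊₁` from above
    intro k hik hkj
    have hpath := hconn _ (mk_mem_cells_sdiff.2 ⟨le_rfl, hi⟩) _ (mk_mem_cells_sdiff.2 ⟨le_rfl, hj⟩)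
    obtain ⟨c, hk, hk1⟩ := exists_vertical_of_reflTransGen hpath
      (mk_mem_cells_sdiff.2 ⟨le_rfl, hi⟩) hik hkj
    rw [mk_mem_cells_sdiff] at hk hk1
    have hrim' : (k + 1, ν.rowLen k + 1) ∉ μ.cells :=
      mem_filter.1 (hrim (mk_mem_cells_sdiff.2 ⟨le_rfl, hk.1.trans_lt hk.2⟩)) |>.2
    rw [mem_cells, mem_iff_lt_rowLen, not_lt] at hrim'
    omega

variable {μ ν : YoungDiagram} {N : ℕ}

def beta (μ : YoungDiagram) (N k : ℕ) : ℕ := μ.rowLen k + (N - k)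

def betaSet (μ : YoungDiagram) (N : ℕ) : Finset ℕ := (range (N + 1)).image (μ.beta N)

lemma mem_betaSet {b : ℕ} : b ∈ μ.betaSet N ↔ ∃ k ≤ N, μ.beta N k = b := by
  simp [betaSet]

lemma beta_mem_betaSet {k : ℕ} (hk : k ≤ N) : μ.beta N k ∈ μ.betaSet N :=
  mem_betaSet.2 ⟨k, hk, rfl⟩

lemma beta_antitone (μ : YoungDiagram) (N : ℕ) : Antitone (μ.beta N) := fun k l hkl => by
  have := μ.rowLen_anti k l hkl
  unfold beta
  omega

lemma beta_lt_beta (μ : YoungDiagram) {k l : ℕ} (hkl : k < l) (hl : l ≤ N) :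
    μ.beta N l < μ.beta N k := by
  have := μ.rowLen_anti k l hkl.le
  unfold beta
  omega

lemma beta_injOn (μ : YoungDiagram) (N : ℕ) : Set.InjOn (μ.beta N) (Set.Iic N) := by
  intro k hk l hl hkl
  by_contra hne
  rcases lt_or_gt_of_ne hne with h | h
  · exact (μ.beta_lt_beta h hl).ne' hkl
  · exact (μ.beta_lt_beta h hk).ne hkl

lemma card_betaSet : #(μ.betaSet N) = N + 1 := by
  rw [betaSet, card_image_of_injOn, card_range]
  exact (μ.beta_injOn N).mono fun k hk => Nat.lt_succ_iff.1 (mem_range.1 hk)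

lemma eq_of_betaSet_eq (hμ : (N, 0) ∉ μ) (hν : (N, 0) ∉ ν) (h : μ.betaSet N = ν.betaSet N) :
    μ = ν := by
  have hanti : ∀ ρ : YoungDiagram, StrictAnti fun k : Fin (N + 1) => ρ.beta N k :=
    fun ρ k l hkl => ρ.beta_lt_beta hkl (Nat.lt_succ_iff.1 l.2)
  have hrange : ∀ ρ : YoungDiagram,
      Set.range (fun k : Fin (N + 1) => ρ.beta N k) = ↑(ρ.betaSet N) := fun ρ => by
    ext b
    simp [mem_betaSet, Fin.exists_iff]
  have hbeta := (StrictAnti.range_inj (hanti μ) (hanti ν)).1 (by rw [hrange, hrange, h])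
  refine ext_of_rowLen fun k => ?_
  rcases le_or_gt N k with hk | hk
  · rw [rowLen_eq_zero_of_le hμ hk, rowLen_eq_zero_of_le hν hk]
  · have := congrFun hbeta ⟨k, by omega⟩
    simp only [beta] at this
    omega

namespace IsRimHookRemovalRows

variable {i j : ℕ}

lemma lt_of_notMem (h : IsRimHookRemovalRows μ ν i j) (hN : (N, 0) ∉ μ) : j < N :=
  lt_of_mk_mem hN (mem_iff_lt_rowLen.2 (by have := h.rowLen_lt; omega))

lemma betaSet_eq (h : IsRimHookRemovalRows μ ν i j) (hN : (N, 0) ∉ μ) :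
    ν.betaSet N = insert (ν.beta N j) ((μ.betaSet N).erase (μ.beta N i)) := by
  have hjN := h.lt_of_notMem hN
  have hij := h.le
  have hout : ∀ k, k < i ∨ j < k → ν.beta N k = μ.beta N k := fun k hk => by
    simp only [beta, h.rowLen_eq k hk]
  have hin : ∀ k, i ≤ k → k < j → ν.beta N k = μ.beta N (k + 1) := fun k hik hkj => by
    have := h.rowLen_succ k hik hkj
    simp only [beta]
    omega
  have hne : ∀ k, k ≤ N → k ≠ i → μ.beta N k ≠ μ.beta N i := fun k hk hki hb =>
    hki (μ.beta_injOn N hk (show i ≤ N by omega) hb)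
  ext b
  simp only [mem_insert, mem_erase, mem_betaSet]
  constructor
  · rintro ⟨k, hk, rfl⟩
    by_cases hkj : k = j
    · exact Or.inl (hkj ▸ rfl)
    by_cases hmid : i ≤ k ∧ k < j
    · rw [hin k hmid.1 hmid.2]
      exact Or.inr ⟨hne _ (by omega) (by omega), k + 1, by omega, rfl⟩
    · rw [hout k (by omega)]
      exact Or.inr ⟨hne _ hk (by omega), k, hk, rfl⟩
  · rintro (rfl | ⟨hb, m, hm, rfl⟩)
    · exact ⟨j, hjN.le, rfl⟩
    have hmi : m ≠ i := by
      rintro rfl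
      exact hb rfl
    by_cases hmid : i < m ∧ m ≤ j
    · refine ⟨m - 1, by omega, ?_⟩
      rw [hin (m - 1) (by omega) (by omega), Nat.sub_add_cancel (by omega)]
    · exact ⟨m, hm, hout m (by omega)⟩

lemma beta_add_card (h : IsRimHookRemovalRows μ ν i j) (hN : (N, 0) ∉ μ) :
    μ.beta N i + #ν.cells = ν.beta N j + #μ.cells := by
  have hsum := h.sum_rowLen_sub (h.lt_of_notMem hN)
  have hμ : (#μ.cells : ℤ) = ∑ k ∈ range N, (μ.rowLen k : ℤ) := by
    rw [card_cells_eq_sum_rowLen hN]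
    push_cast
    rfl
  have hν : (#ν.cells : ℤ) = ∑ k ∈ range N, (ν.rowLen k : ℤ) := by
    rw [card_cells_eq_sum_rowLen fun h0 => hN (h.subset h0)]
    push_cast
    rfl
  rw [sum_sub_distrib] at hsum
  have := h.le
  have := h.lt_of_notMem hN
  unfold beta
  omega

lemma card_lt (h : IsRimHookRemovalRows μ ν i j) : #ν.cells < #μ.cells :=
  card_lt_card <| (ssubset_iff_of_subset h.subset).2
    ⟨_, mem_sdiff.1 (mk_mem_cells_sdiff.2 ⟨le_rfl, h.rowLen_lt⟩)⟩

lemma beta_notMem_betaSet (h : IsRimHookRemovalRows μ ν i j) (hN : (N, 0) ∉ μ) :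
    ν.beta N j ∉ μ.betaSet N := by
  intro hmem
  have hcard := congrArg card (h.betaSet_eq hN)
  rw [card_betaSet] at hcard
  by_cases hi : ν.beta N j = μ.beta N i
  · have := h.beta_add_card hN
    have := h.card_lt
    omega
  · have hiN : i ≤ N := by
      have := h.le
      have := h.lt_of_notMem hN
      omega
    rw [card_insert_of_mem (mem_erase.2 ⟨hi, hmem⟩),
      card_erase_of_mem (beta_mem_betaSet hiN), card_betaSet] at hcard
    omega

end IsRimHookRemovalRows

lemma exists_isRimHookRemovalRows {i j x : ℕ} (hij : i ≤ j) (hxj1 : μ.rowLen (j + 1) ≤ x)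
    (hxj : x < μ.rowLen j) : ∃ ν, IsRimHookRemovalRows μ ν i j ∧ ν.rowLen j = x := by
  set f : ℕ → ℕ := fun k =>
    if k < i then μ.rowLen k else if k < j then μ.rowLen (k + 1) - 1
    else if k = j then x else μ.rowLen k
  have hf : Antitone f := by
    refine antitone_nat_of_succ_le fun k => ?_
    have h1 := μ.rowLen_anti k (k + 1) k.le_succ
    have h2 := μ.rowLen_anti (k + 1) (k + 1 + 1) (k + 1).le_succ
    obtain hkj | rfl | hkj := lt_trichotomy (k + 1) j
    · have h3 := μ.rowLen_anti (k + 1 + 1) j hkj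
      simp only [f]
      split_ifs <;> omega
    · simp only [f]
      split_ifs <;> omega
    · obtain rfl | hjk := (Nat.le_of_lt_succ hkj).eq_or_lt
      all_goals simp only [f]; split_ifs <;> omega
  have hν : ∀ k, (μ.restrictRowLen f hf).rowLen k = min (μ.rowLen k) (f k) :=
    μ.rowLen_restrictRowLen hf
  have hfj : f j = x := by simp [f, hij.not_gt]
  refine ⟨μ.restrictRowLen f hf, ⟨hij, ?_, fun k hk => ?_, fun k hik hkj => ?_⟩, ?_⟩
  · rw [hν, hfj]
    omega
  · have : ¬(i ≤ k ∧ k ≤ j) := by omega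
    simp only [hν, f]
    split_ifs <;> omega
  · have h1 := μ.rowLen_anti k (k + 1) k.le_succ
    have h2 := μ.rowLen_anti (k + 1) j hkj
    simp only [hν, f, if_neg (show ¬k < i by omega), if_pos hkj]
    omega
  · rw [hν, hfj]
    omega

lemma exists_beta_succ_lt_lt_beta (hN : (N, 0) ∉ μ) {i t : ℕ}
    (hti : t ≤ μ.beta N i) (ht : t ∉ μ.betaSet N) :
    ∃ j, i ≤ j ∧ μ.beta N (j + 1) < t ∧ t < μ.beta N j := by
  have hβN : μ.beta N N = 0 := by simp [beta, rowLen_eq_zero_of_le hN le_rfl]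
  have ht0 : 0 < t := Nat.pos_of_ne_zero fun h0 => ht (h0 ▸ hβN ▸ beta_mem_betaSet le_rfl)
  have hNt : μ.beta N (N + 1) < t := (μ.beta_antitone N N.le_succ).trans_lt (by omega)
  have hex : ∃ k, μ.beta N (k + 1) < t := ⟨N, hNt⟩
  obtain ⟨j, hj1, hjmin, hjN⟩ : ∃ j, μ.beta N (j + 1) < t ∧
      (∀ k < j, t ≤ μ.beta N (k + 1)) ∧ j ≤ N :=
    ⟨Nat.find hex, Nat.find_spec hex, fun k hk => not_lt.1 (Nat.find_min hex hk),
      Nat.find_min' hex hNt⟩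
  have hij : i ≤ j := by
    by_contra! hji
    exact absurd ((μ.beta_antitone N hji).trans_lt hj1) (by omega)
  have htj : t ≤ μ.beta N j := by
    rcases hij.eq_or_lt with rfl | hij
    · exact hti
    · simpa [Nat.sub_add_cancel (show 1 ≤ j by omega)] using hjmin (j - 1) (by omega)
  exact ⟨j, hij, hj1, htj.lt_of_ne fun h => ht (h ▸ beta_mem_betaSet hjN)⟩

lemma exists_isRimHookRemovalRows_of_beta (hN : (N, 0) ∉ μ) {i p : ℕ}
    (hfree : μ.beta N i - p ∉ μ.betaSet N) :
    ∃ ν j, IsRimHookRemovalRows μ ν i j ∧ ν.beta N j = μ.beta N i - p := by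
  have hti : μ.beta N i - p ≤ μ.beta N i := Nat.sub_le _ _
  generalize μ.beta N i - p = t at hfree hti ⊢
  obtain ⟨j, hij, hj1, hjt⟩ := exists_beta_succ_lt_lt_beta hN hti hfree
  have hjN : j < N := by
    by_contra! hjN
    have := rowLen_eq_zero_of_le hN hjN
    simp only [beta] at hjt
    omega
  simp only [beta] at hj1 hjt
  obtain ⟨ν, hν, hνj⟩ :=
    exists_isRimHookRemovalRows (μ := μ) (x := t - (N - j)) hij (by omega) (by omega)
  exact ⟨ν, j, hν, by simp only [beta, hνj]; omega⟩

end YoungDiagram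

open YoungDiagram

lemma IsRimHookRemoval.exists_betaSet_eq {p N : ℕ} {μ ν : YoungDiagram} (hp : 0 < p)
    (hN : (N, 0) ∉ μ) (h : IsRimHookRemoval p μ ν) :
    ∃ b ∈ μ.betaSet N, p ≤ b ∧ b - p ∉ μ.betaSet N ∧
      ν.betaSet N = insert (b - p) ((μ.betaSet N).erase b) := by
  obtain ⟨i, j, hrows⟩ := h.exists_isRimHookRemovalRows hp
  have hcard : #ν.cells + p = #μ.cells := by
    rw [← h.2.1, card_sdiff_of_subset h.1]
    have := card_le_card h.1
    omega
  have hbeta := hrows.beta_add_card hN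
  have hsub : μ.beta N i - p = ν.beta N j := by omega
  refine ⟨μ.beta N i, beta_mem_betaSet ?_, by omega, hsub ▸ hrows.beta_notMem_betaSet hN,
    hsub ▸ hrows.betaSet_eq hN⟩
  have := hrows.le
  have := hrows.lt_of_notMem hN
  omega

lemma isPCore_iff_betaSet {p N : ℕ} {μ : YoungDiagram} (hp : 0 < p) (hN : (N, 0) ∉ μ) :
    IsPCore p μ ↔ ∀ b ∈ μ.betaSet N, p ≤ b → b - p ∈ μ.betaSet N := by
  constructor
  · intro hcore b hb hpb
    by_contra hfree
    obtain ⟨k, -, rfl⟩ := mem_betaSet.1 hb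
    obtain ⟨ν, j, hrows, hνj⟩ := exists_isRimHookRemovalRows_of_beta hN hfree
    have hcard := hrows.beta_add_card hN
    have hp' : #μ.cells - #ν.cells = p := by omega
    exact hcore ⟨ν, hp' ▸ hrows.isRimHookRemoval⟩
  · rintro hclosed ⟨ν, hν⟩
    obtain ⟨b, hb, hpb, hfree, -⟩ := hν.exists_betaSet_eq hp hN
    exact hfree (hclosed b hb hpb)

lemma IsRimHookRemoval.betaSet_map_mod {p N : ℕ} {μ ν : YoungDiagram} (hp : 0 < p)
    (hN : (N, 0) ∉ μ) (h : IsRimHookRemoval p μ ν) :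
    (ν.betaSet N).val.map (· % p) = (μ.betaSet N).val.map (· % p) := by
  obtain ⟨b, hb, hpb, hfree, heq⟩ := h.exists_betaSet_eq hp hN
  rw [heq]
  exact Finset.map_val_insert_erase hb hfree (Nat.mod_eq_sub_mod hpb).symm

lemma betaSet_map_mod_of_reflTransGen {p N : ℕ} {μ c : YoungDiagram} (hp : 0 < p)
    (hN : (N, 0) ∉ μ) (h : Relation.ReflTransGen (IsRimHookRemoval p) μ c) :
    (N, 0) ∉ c ∧ (c.betaSet N).val.map (· % p) = (μ.betaSet N).val.map (· % p) := by
  induction h with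
  | refl => exact ⟨hN, rfl⟩
  | tail _ hstep ih =>
    exact ⟨fun hc => ih.1 (hstep.1 hc), (hstep.betaSet_map_mod hp ih.1).trans ih.2⟩

/-- The `p`-core of a partition is well-defined: any two maximal sequences of
rim `p`-hook removals from `λ` terminate in the same partition. -/
theorem pCore_well_defined (p : ℕ) (hp : 0 < p) (lam c₁ c₂ : YoungDiagram)
    (h₁ : Relation.ReflTransGen (IsRimHookRemoval p) lam c₁) (hc₁ : IsPCore p c₁)
    (h₂ : Relation.ReflTransGen (IsRimHookRemoval p) lam c₂) (hc₂ : IsPCore p c₂) :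
    c₁ = c₂ := by
  have hN : (lam.colLen 0, 0) ∉ lam := fun h => (mem_iff_lt_colLen.1 h).false
  obtain ⟨hN₁, hres₁⟩ := betaSet_map_mod_of_reflTransGen hp hN h₁
  obtain ⟨hN₂, hres₂⟩ := betaSet_map_mod_of_reflTransGen hp hN h₂
  have hclosed₁ := (isPCore_iff_betaSet hp hN₁).1 hc₁
  have hclosed₂ := (isPCore_iff_betaSet hp hN₂).1 hc₂
  refine eq_of_betaSet_eq hN₁ hN₂ (Finset.ext fun x => ?_)
  rw [Finset.mem_iff_div_lt_count_mod hp hclosed₁, Finset.mem_iff_div_lt_count_mod hp hclosed₂,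
    hres₁, hres₂]
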